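/- arXiv:2604.03146 — 3 statements merged into one kernel-verified Lean document; each statement's English description precedes it below -/
import Mathlib

section
/- Let H, C be symmetric positive-definite p×p real matrices, w ∈ ℝ^p, and α > 0. Define p(α) = min over θ with θᵀCθ = α² of { wᵀθ + (1/2)θᵀHθ }, and for ν ∈ 𝒟 := {ν ∈ ℝ : H + νC ≻ 0} define d(ν) = −(1/2)·wᵀ(H + νC)⁻¹w − α²ν/2. Then p(α) = sup over ν ∈ 𝒟 of d(ν). -/
open Matrix

section StrongDualityAux

variable {p : ℕ}

lemma sd_symm_dot (M : Matrix (Fin p) (Fin p) ℝ) (hM : M.IsHermitian)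
    (x y : Fin p → ℝ) : x ⬝ᵥ M *ᵥ y = y ⬝ᵥ M *ᵥ x := by
  have ht : Mᵀ = M := by
    have := hM.eq; rwa [conjTranspose_eq_transpose_of_trivial] at this
  rw [dotProduct_mulVec, ← ht, vecMul_transpose, ht, dotProduct_comm]

lemma sd_pos_quad {M : Matrix (Fin p) (Fin p) ℝ} (hM : M.PosDef) {x : Fin p → ℝ}
    (hx : x ≠ 0) : 0 < x ⬝ᵥ M *ᵥ x := by simpa using hM.dotProduct_mulVec_pos hx

lemma sd_nonneg_quad {M : Matrix (Fin p) (Fin p) ℝ} (hM : M.PosSemidef) (x : Fin p → ℝ) :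
    0 ≤ x ⬝ᵥ M *ᵥ x := by simpa using hM.dotProduct_mulVec_nonneg x

lemma sd_herm_smul {C : Matrix (Fin p) (Fin p) ℝ} (hC : C.IsHermitian) (ν : ℝ) :
    (ν • C).IsHermitian := by
  show (ν • C)ᴴ = ν • C
  rw [conjTranspose_smul, hC.eq, star_trivial]

lemma sd_quad_smul (M : Matrix (Fin p) (Fin p) ℝ) (c : ℝ) (x : Fin p → ℝ) :
    (c • x) ⬝ᵥ M *ᵥ (c • x) = c ^ 2 * (x ⬝ᵥ M *ᵥ x) := by
  rw [mulVec_smul, dotProduct_smul, smul_dotProduct, smul_eq_mul, smul_eq_mul]; ring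

/-- the unconstrained minimum of `θ ↦ w⬝θ + ½ θᵀMθ` is `−½ wᵀM⁻¹w`. -/
lemma sd_quad_min {M : Matrix (Fin p) (Fin p) ℝ} (hM : M.PosDef) (w θ : Fin p → ℝ) :
    -(1 / 2) * (w ⬝ᵥ M⁻¹ *ᵥ w) ≤ w ⬝ᵥ θ + (1 / 2) * (θ ⬝ᵥ M *ᵥ θ) := by
  have hinv : M * M⁻¹ = 1 := mul_nonsing_inv M hM.det_pos.ne'.isUnit
  set u : Fin p → ℝ := M⁻¹ *ᵥ w with hu
  have hMu : M *ᵥ u = w := by rw [hu, mulVec_mulVec, hinv, one_mulVec]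
  have h0 : 0 ≤ (θ + u) ⬝ᵥ M *ᵥ (θ + u) := sd_nonneg_quad hM.posSemidef _
  have hexp : (θ + u) ⬝ᵥ M *ᵥ (θ + u)
      = θ ⬝ᵥ M *ᵥ θ + 2 * (w ⬝ᵥ θ) + w ⬝ᵥ u := by
    rw [mulVec_add, dotProduct_add, add_dotProduct, add_dotProduct, hMu,
      sd_symm_dot M hM.isHermitian u θ, hMu, dotProduct_comm θ w, dotProduct_comm u w]
    ring
  rw [hexp] at h0
  linarith

/-- coercivity of a positive definite quadratic form. -/
lemma sd_quad_coercive (hp : 1 ≤ p) {C : Matrix (Fin p) (Fin p) ℝ} (hC : C.PosDef) :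
    ∃ m : ℝ, 0 < m ∧ ∀ x : Fin p → ℝ, m * ‖x‖ ^ 2 ≤ x ⬝ᵥ C *ᵥ x := by
  have contQ : Continuous fun x : Fin p → ℝ => x ⬝ᵥ C *ᵥ x :=
    continuous_id.dotProduct (continuous_const.matrix_mulVec continuous_id)
  have hsne : (Metric.sphere (0 : Fin p → ℝ) 1).Nonempty := by
    refine ⟨Pi.single ⟨0, hp⟩ 1, ?_⟩
    simp [Pi.norm_single]
  obtain ⟨y, hy, hymin⟩ := (isCompact_sphere (0 : Fin p → ℝ) 1).exists_isMinOn hsne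
    contQ.continuousOn
  have hy1 : ‖y‖ = 1 := by simpa using hy
  have hy0 : y ≠ 0 := by intro h; rw [h] at hy1; simp at hy1
  refine ⟨y ⬝ᵥ C *ᵥ y, sd_pos_quad hC hy0, fun x => ?_⟩
  rcases eq_or_ne x 0 with rfl | hx0
  · simp
  · have hxn : (0:ℝ) < ‖x‖ := norm_pos_iff.2 hx0
    set z : Fin p → ℝ := ‖x‖⁻¹ • x with hz
    have hzs : z ∈ Metric.sphere (0 : Fin p → ℝ) 1 := by
      simp [hz, norm_smul, abs_of_pos (inv_pos.2 hxn), inv_mul_cancel₀ hxn.ne']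
    have h1 : y ⬝ᵥ C *ᵥ y ≤ z ⬝ᵥ C *ᵥ z := hymin hzs
    have h2 : x ⬝ᵥ C *ᵥ x = ‖x‖ ^ 2 * (z ⬝ᵥ C *ᵥ z) := by
      rw [hz, sd_quad_smul]
      field_simp
    rw [h2]
    have := mul_le_mul_of_nonneg_left h1 (sq_nonneg ‖x‖)
    nlinarith

lemma sd_feas_nonempty (hp : 1 ≤ p) {C : Matrix (Fin p) (Fin p) ℝ} (hC : C.PosDef)
    {α : ℝ} : ∃ θ : Fin p → ℝ, θ ⬝ᵥ C *ᵥ θ = α ^ 2 := by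
  set y : Fin p → ℝ := Pi.single ⟨0, hp⟩ 1 with hy
  have hy0 : y ≠ 0 := by
    intro h
    have : y ⟨0, hp⟩ = 0 := by rw [h]; rfl
    simp [hy] at this
  have hq : 0 < y ⬝ᵥ C *ᵥ y := sd_pos_quad hC hy0
  refine ⟨(α / Real.sqrt (y ⬝ᵥ C *ᵥ y)) • y, ?_⟩
  rw [sd_quad_smul, div_pow, Real.sq_sqrt hq.le, div_mul_cancel₀ _ hq.ne']

lemma sd_exists_minimizer (hp : 1 ≤ p) {C : Matrix (Fin p) (Fin p) ℝ} (hC : C.PosDef)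
    {α : ℝ} (hα : 0 < α) (f : (Fin p → ℝ) → ℝ) (hf : Continuous f) :
    ∃ θ : Fin p → ℝ, θ ⬝ᵥ C *ᵥ θ = α ^ 2 ∧
      ∀ θ' : Fin p → ℝ, θ' ⬝ᵥ C *ᵥ θ' = α ^ 2 → f θ ≤ f θ' := by
  obtain ⟨m, hm0, hmle⟩ := sd_quad_coercive hp hC
  have hne : ∃ θ : Fin p → ℝ, θ ⬝ᵥ C *ᵥ θ = α ^ 2 := sd_feas_nonempty hp hC
  set K : Set (Fin p → ℝ) := {x | x ⬝ᵥ C *ᵥ x = α ^ 2} with hK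
  have contQ : Continuous fun x : Fin p → ℝ => x ⬝ᵥ C *ᵥ x :=
    continuous_id.dotProduct (continuous_const.matrix_mulVec continuous_id)
  have hclosed : IsClosed K := isClosed_eq contQ continuous_const
  have hbdd : Bornology.IsBounded K := by
    refine (Metric.isBounded_closedBall (x := (0 : Fin p → ℝ))
      (r := max 1 (α ^ 2 / m))).subset ?_
    intro x hx
    simp only [Metric.mem_closedBall, dist_zero_right]
    rcases le_or_gt ‖x‖ 1 with h | h
    · exact le_max_of_le_left h
    · refine le_max_of_le_right ?_
      have h1 : m * ‖x‖ ^ 2 ≤ α ^ 2 := by rw [← hx]; exact hmle x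
      rw [le_div_iff₀ hm0]
      nlinarith
  have hcpt : IsCompact K := Metric.isCompact_of_isClosed_isBounded hclosed hbdd
  obtain ⟨θ, hθK, hmin⟩ := hcpt.exists_isMinOn hne hf.continuousOn
  exact ⟨θ, hθK, fun θ' hθ' => hmin hθ'⟩

noncomputable def sdDotCLM (w : Fin p → ℝ) : (Fin p → ℝ) →L[ℝ] ℝ :=
  LinearMap.toContinuousLinearMap
    { toFun := fun x => w ⬝ᵥ x
      map_add' := fun x y => dotProduct_add w x y
      map_smul' := fun c x => by simp [dotProduct_smul] }

@[simp] lemma sdDotCLM_apply (w x : Fin p → ℝ) : sdDotCLM w x = w ⬝ᵥ x := rfl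

noncomputable def sdBform (M : Matrix (Fin p) (Fin p) ℝ) :
    (Fin p → ℝ) →L[ℝ] (Fin p → ℝ) →L[ℝ] ℝ :=
  LinearMap.toContinuousLinearMap
    ((LinearMap.toContinuousLinearMap :
        ((Fin p → ℝ) →ₗ[ℝ] ℝ) ≃ₗ[ℝ] ((Fin p → ℝ) →L[ℝ] ℝ)).toLinearMap.comp
      (Matrix.toLinearMap₂' ℝ M))

@[simp] lemma sdBform_apply (M : Matrix (Fin p) (Fin p) ℝ) (x y : Fin p → ℝ) :
    sdBform M x y = x ⬝ᵥ M *ᵥ y := by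
  simp [sdBform, Matrix.toLinearMap₂'_apply']

lemma sd_hasStrictFDerivAt_quad (M : Matrix (Fin p) (Fin p) ℝ) (x₀ : Fin p → ℝ) :
    HasStrictFDerivAt (fun x : Fin p → ℝ => x ⬝ᵥ M *ᵥ x)
      (sdBform M x₀ + (sdBform M).flip x₀) x₀ := by
  have hb := (sdBform M).isBoundedBilinearMap.hasStrictFDerivAt (x₀, x₀)
  have hd : HasStrictFDerivAt (fun x : Fin p → ℝ => (x, x))
      ((ContinuousLinearMap.id ℝ (Fin p → ℝ)).prod (ContinuousLinearMap.id ℝ (Fin p → ℝ))) x₀ :=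
    ((ContinuousLinearMap.id ℝ (Fin p → ℝ)).prod
      (ContinuousLinearMap.id ℝ (Fin p → ℝ))).hasStrictFDerivAt
  have hcomp : HasStrictFDerivAt
      ((fun q : (Fin p → ℝ) × (Fin p → ℝ) => sdBform M q.1 q.2) ∘ (fun x => (x, x)))
      (((sdBform M).isBoundedBilinearMap.deriv (x₀, x₀)).comp
        (((ContinuousLinearMap.id ℝ (Fin p → ℝ)).prod (ContinuousLinearMap.id ℝ (Fin p → ℝ)))))
      x₀ := HasStrictFDerivAt.comp (f := fun x : Fin p → ℝ => (x, x)) x₀ hb hd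
  refine (hcomp.congr_of_eventuallyEq (Filter.Eventually.of_forall fun x => by simp)).congr_fderiv ?_
  ext v
  simp [IsBoundedBilinearMap.deriv_apply]

/-- Lagrange multiplier at the constrained minimizer. -/
lemma sd_exists_multiplier {H C : Matrix (Fin p) (Fin p) ℝ} (hH : H.PosDef) (hC : C.PosDef)
    (w : Fin p → ℝ) {α : ℝ} (hα : 0 < α) {θs : Fin p → ℝ}
    (hfeas : θs ⬝ᵥ C *ᵥ θs = α ^ 2)
    (hmin : ∀ θ : Fin p → ℝ, θ ⬝ᵥ C *ᵥ θ = α ^ 2 →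
      w ⬝ᵥ θs + (1 / 2) * (θs ⬝ᵥ H *ᵥ θs) ≤ w ⬝ᵥ θ + (1 / 2) * (θ ⬝ᵥ H *ᵥ θ)) :
    ∃ ν : ℝ, w + H *ᵥ θs + ν • (C *ᵥ θs) = 0 := by
  set φ : (Fin p → ℝ) → ℝ := fun θ => w ⬝ᵥ θ + (1 / 2) * (θ ⬝ᵥ H *ᵥ θ) with hφdef
  set g : (Fin p → ℝ) → ℝ := fun θ => θ ⬝ᵥ C *ᵥ θ with hgdef
  have hg' : HasStrictFDerivAt g (sdBform C θs + (sdBform C).flip θs) θs :=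
    sd_hasStrictFDerivAt_quad C θs
  have hφ' : HasStrictFDerivAt φ
      (sdDotCLM w + (1 / 2 : ℝ) • (sdBform H θs + (sdBform H).flip θs)) θs := by
    have h1 := (sdDotCLM w).hasStrictFDerivAt (x := θs)
    have h2 := (sd_hasStrictFDerivAt_quad H θs).const_smul (1 / 2 : ℝ)
    have := h1.add h2
    exact this.congr_of_eventuallyEq (Filter.Eventually.of_forall fun x => by simp [hφdef, smul_eq_mul])
  have hextr : IsLocalExtrOn φ {x | g x = g θs} θs := by
    left
    apply IsMinFilter.filter_mono (l := Filter.principal {x | g x = g θs})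
    · intro x hx
      simp only [Set.mem_setOf_eq, hgdef] at hx
      exact hmin x (by rw [hx, hfeas])
    · exact inf_le_right
  obtain ⟨a, b, hab, heq⟩ := hextr.exists_multipliers_of_hasStrictFDerivAt_1d hg' hφ'
  have heval : ∀ v : Fin p → ℝ,
      a * (2 * (θs ⬝ᵥ C *ᵥ v)) + b * (w ⬝ᵥ v + θs ⬝ᵥ H *ᵥ v) = 0 := by
    intro v
    have := congrFun (congrArg DFunLike.coe heq) v
    simp only [ContinuousLinearMap.add_apply, ContinuousLinearMap.smul_apply,
      ContinuousLinearMap.zero_apply, ContinuousLinearMap.flip_apply, sdBform_apply,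
      sdDotCLM_apply, smul_eq_mul] at this
    rw [sd_symm_dot C hC.isHermitian v θs, sd_symm_dot H hH.isHermitian v θs] at this
    linarith
  have hb0 : b ≠ 0 := by
    intro hb
    have ha : a ≠ 0 := by
      intro ha; apply hab; simp [ha, hb, Prod.ext_iff]
    have := heval θs
    rw [hb, hfeas] at this
    simp only [mul_zero, zero_mul, add_zero] at this
    have : a * (2 * α ^ 2) = 0 := by linarith
    rcases mul_eq_zero.1 this with h | h
    · exact ha h
    · nlinarith
  refine ⟨2 * a / b, ?_⟩
  have hv : ∀ v : Fin p → ℝ, (w + H *ᵥ θs + (2 * a / b) • (C *ᵥ θs)) ⬝ᵥ v = 0 := by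
    intro v
    have h1 := heval v
    have h2 : w ⬝ᵥ v + θs ⬝ᵥ H *ᵥ v + (2 * a / b) * (θs ⬝ᵥ C *ᵥ v) = 0 := by
      field_simp
      linarith [heval v]
    rw [add_dotProduct, add_dotProduct, smul_dotProduct, smul_eq_mul,
      dotProduct_comm (H *ᵥ θs) v, dotProduct_comm (C *ᵥ θs) v,
      sd_symm_dot H hH.isHermitian v θs, sd_symm_dot C hC.isHermitian v θs]
    linarith
  have := hv (w + H *ᵥ θs + (2 * a / b) • (C *ᵥ θs))
  exact dotProduct_self_eq_zero.mp this

/-- `H + νC` is positive semidefinite (quadratic-form version) at a global minimizer. -/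
lemma sd_psd_at_min {H C : Matrix (Fin p) (Fin p) ℝ} (hH : H.PosDef) (hC : C.PosDef)
    (w : Fin p → ℝ) {α ν : ℝ} (hα : 0 < α) {θs : Fin p → ℝ}
    (hfeas : θs ⬝ᵥ C *ᵥ θs = α ^ 2)
    (hmin : ∀ θ : Fin p → ℝ, θ ⬝ᵥ C *ᵥ θ = α ^ 2 →
      w ⬝ᵥ θs + (1 / 2) * (θs ⬝ᵥ H *ᵥ θs) ≤ w ⬝ᵥ θ + (1 / 2) * (θ ⬝ᵥ H *ᵥ θ))
    (hstat : w + H *ᵥ θs + ν • (C *ᵥ θs) = 0) :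
    ∀ u : Fin p → ℝ, 0 ≤ u ⬝ᵥ (H + ν • C) *ᵥ u := by
  set M : Matrix (Fin p) (Fin p) ℝ := H + ν • C with hM
  have hMherm : M.IsHermitian := hH.isHermitian.add (sd_herm_smul hC.isHermitian ν)
  have hsym := sd_symm_dot M hMherm
  have hCsym := sd_symm_dot C hC.isHermitian
  have hMvec : M *ᵥ θs = H *ᵥ θs + ν • (C *ᵥ θs) := by
    rw [hM, add_mulVec, smul_mulVec]
  have hstat' : ∀ v : Fin p → ℝ, θs ⬝ᵥ M *ᵥ v = -(w ⬝ᵥ v) := by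
    intro v
    have h0 : (w + M *ᵥ θs) ⬝ᵥ v = 0 := by
      rw [hMvec, ← add_assoc, hstat, zero_dotProduct]
    rw [add_dotProduct] at h0
    rw [hsym θs v, dotProduct_comm v (M *ᵥ θs)] at *
    linarith
  have hquadM : ∀ x : Fin p → ℝ, x ⬝ᵥ M *ᵥ x = x ⬝ᵥ H *ᵥ x + ν * (x ⬝ᵥ C *ᵥ x) := by
    intro x
    rw [hM, add_mulVec, dotProduct_add, smul_mulVec, dotProduct_smul, smul_eq_mul]
  have hdiff : ∀ θ : Fin p → ℝ, θ ⬝ᵥ C *ᵥ θ = α ^ 2 →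
      0 ≤ (θ - θs) ⬝ᵥ M *ᵥ (θ - θs) := by
    intro θ hθ
    have hexp : (θ - θs) ⬝ᵥ M *ᵥ (θ - θs)
        = θ ⬝ᵥ M *ᵥ θ - 2 * (θs ⬝ᵥ M *ᵥ θ) + θs ⬝ᵥ M *ᵥ θs := by
      rw [mulVec_sub, dotProduct_sub, sub_dotProduct, sub_dotProduct,
        hsym θ θs]
      ring
    have h1 : θ ⬝ᵥ M *ᵥ θ = θ ⬝ᵥ H *ᵥ θ + ν * α ^ 2 := by rw [hquadM, hθ]
    have h2 : θs ⬝ᵥ M *ᵥ θs = θs ⬝ᵥ H *ᵥ θs + ν * α ^ 2 := by rw [hquadM, hfeas]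
    have h3 := hstat' θ
    have h4 := hstat' θs
    have h5 := hmin θ hθ
    rw [hexp, h1]
    rw [h4] at h2
    linarith [h3, h2]
  intro u
  rcases eq_or_ne u 0 with rfl | hu0
  · simp
  have key : ∀ u' : Fin p → ℝ, u' ≠ 0 → θs ⬝ᵥ C *ᵥ u' ≠ 0 → 0 ≤ u' ⬝ᵥ M *ᵥ u' := by
    intro u' hu' hcu
    set q : ℝ := u' ⬝ᵥ C *ᵥ u' with hq
    have hqpos : 0 < q := sd_pos_quad hC hu'
    set s : ℝ := θs ⬝ᵥ C *ᵥ u' with hs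
    set t : ℝ := -2 * s / q with ht
    have ht0 : t ≠ 0 := by
      rw [ht]; exact div_ne_zero (by simpa using hcu) hqpos.ne'
    have hfeas' : (θs + t • u') ⬝ᵥ C *ᵥ (θs + t • u') = α ^ 2 := by
      rw [mulVec_add, dotProduct_add, add_dotProduct, add_dotProduct,
        mulVec_smul, dotProduct_smul, smul_dotProduct, dotProduct_smul,
        hCsym u' θs]
      simp only [smul_dotProduct, smul_eq_mul, ← hs, ← hq, hfeas]
      rw [ht]; field_simp; ring
    have := hdiff _ hfeas'
    rw [add_sub_cancel_left] at this
    have hexp : (t • u') ⬝ᵥ M *ᵥ (t • u') = t ^ 2 * (u' ⬝ᵥ M *ᵥ u') := by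
      rw [mulVec_smul, dotProduct_smul, smul_dotProduct, smul_eq_mul, smul_eq_mul]; ring
    rw [hexp] at this
    have ht2 : 0 < t ^ 2 := by positivity
    nlinarith
  rcases eq_or_ne (θs ⬝ᵥ C *ᵥ u) 0 with hczero | hcne
  · set A : ℝ := u ⬝ᵥ M *ᵥ u with hA
    set B : ℝ := θs ⬝ᵥ M *ᵥ u with hB
    set D : ℝ := θs ⬝ᵥ M *ᵥ θs with hD
    have hpert : ∀ ε : ℝ, 0 < ε → 0 ≤ A + 2 * ε * B + ε ^ 2 * D := by
      intro ε hε
      have hne : u + ε • θs ≠ 0 := by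
        intro h
        have hcu : (u + ε • θs) ⬝ᵥ C *ᵥ θs = 0 := by rw [h, zero_dotProduct]
        rw [add_dotProduct, smul_dotProduct, hCsym u θs, hczero, hfeas,
          smul_eq_mul] at hcu
        have : 0 < ε * α ^ 2 := by positivity
        linarith
      have hcu' : θs ⬝ᵥ C *ᵥ (u + ε • θs) ≠ 0 := by
        rw [mulVec_add, dotProduct_add, hczero, mulVec_smul, dotProduct_smul,
          hfeas, smul_eq_mul]
        have : 0 < ε * α ^ 2 := by positivity
        linarith
      have h0 := key _ hne hcu'
      have hexp : (u + ε • θs) ⬝ᵥ M *ᵥ (u + ε • θs) = A + 2 * ε * B + ε ^ 2 * D := by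
        simp only [mulVec_add, dotProduct_add, add_dotProduct, mulVec_smul,
          dotProduct_smul, smul_dotProduct, smul_eq_mul, hsym u θs, hA, hB, hD]
        ring
      rw [hexp] at h0
      exact h0
    have htend : Filter.Tendsto (fun ε : ℝ => A + 2 * ε * B + ε ^ 2 * D)
        (nhdsWithin 0 (Set.Ioi 0)) (nhds A) := by
      have : Continuous fun ε : ℝ => A + 2 * ε * B + ε ^ 2 * D := by continuity
      have h := this.tendsto 0
      simp only [mul_zero, zero_mul, add_zero, zero_pow, ne_eq, OfNat.ofNat_ne_zero,
        not_false_eq_true, zero_mul, add_zero] at h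
      exact h.mono_left nhdsWithin_le_nhds
    refine ge_of_tendsto htend ?_
    filter_upwards [self_mem_nhdsWithin] with ε hε
    exact hpert ε hε
  · exact key u hu0 hcne

end StrongDualityAux

/-- strong duality for the minimization of a quadratic
    wᵀθ + ½θᵀHθ over the ellipsoid {θ : θᵀCθ = α²}, with dual
    d(ν) = −½·wᵀ(H+νC)⁻¹w − α²ν/2 over 𝒟 = {ν : H + νC ≻ 0}. -/
theorem stmt3 {p : ℕ} (hp : 1 ≤ p)
    (H C : Matrix (Fin p) (Fin p) ℝ) (hH : H.PosDef) (hC : C.PosDef)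
    (w : Fin p → ℝ) (α : ℝ) (hα : 0 < α) :
    sInf {v : ℝ | ∃ θ : Fin p → ℝ, θ ⬝ᵥ C *ᵥ θ = α ^ 2 ∧
        v = w ⬝ᵥ θ + (1 / 2) * (θ ⬝ᵥ H *ᵥ θ)} =
    sSup {v : ℝ | ∃ ν : ℝ, (H + ν • C).PosDef ∧
        v = -(1 / 2) * (w ⬝ᵥ (H + ν • C)⁻¹ *ᵥ w) - α ^ 2 * ν / 2} := by
  set S : Set ℝ := {v : ℝ | ∃ θ : Fin p → ℝ, θ ⬝ᵥ C *ᵥ θ = α ^ 2 ∧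
        v = w ⬝ᵥ θ + (1 / 2) * (θ ⬝ᵥ H *ᵥ θ)} with hS
  set D : Set ℝ := {v : ℝ | ∃ ν : ℝ, (H + ν • C).PosDef ∧
        v = -(1 / 2) * (w ⬝ᵥ (H + ν • C)⁻¹ *ᵥ w) - α ^ 2 * ν / 2} with hD
  -- expansion of the shifted quadratic form
  have hquad : ∀ (ν : ℝ) (x : Fin p → ℝ),
      x ⬝ᵥ (H + ν • C) *ᵥ x = x ⬝ᵥ H *ᵥ x + ν * (x ⬝ᵥ C *ᵥ x) := by
    intro ν x
    rw [add_mulVec, dotProduct_add, smul_mulVec, dotProduct_smul, smul_eq_mul]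
  -- weak duality
  have hweak : ∀ d ∈ D, ∀ s ∈ S, d ≤ s := by
    rintro d ⟨ν, hpd, rfl⟩ s ⟨θ, hθ, rfl⟩
    have h1 := sd_quad_min hpd w θ
    have h2 := hquad ν θ
    rw [hθ] at h2
    linarith
  -- nonemptiness
  have hSne : S.Nonempty := by
    obtain ⟨θ, hθ⟩ := sd_feas_nonempty hp hC (α := α)
    exact ⟨_, θ, hθ, rfl⟩
  have hDne : D.Nonempty := by
    refine ⟨-(1 / 2) * (w ⬝ᵥ (H + (0:ℝ) • C)⁻¹ *ᵥ w) - α ^ 2 * 0 / 2, 0, ?_, rfl⟩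
    simpa using hH
  obtain ⟨s₀, hs₀⟩ := hSne
  obtain ⟨d₀, hd₀⟩ := hDne
  have hbddS : BddBelow S := ⟨d₀, fun s hs => hweak d₀ hd₀ s hs⟩
  have hbddD : BddAbove D := ⟨s₀, fun d hd => hweak d hd s₀ hs₀⟩
  have hle1 : sSup D ≤ sInf S :=
    csSup_le ⟨d₀, hd₀⟩ fun d hd => le_csInf ⟨s₀, hs₀⟩ fun s hs => hweak d hd s hs
  -- strong duality
  have contf : Continuous fun θ : Fin p → ℝ => w ⬝ᵥ θ + (1 / 2) * (θ ⬝ᵥ H *ᵥ θ) :=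
    (continuous_const.dotProduct continuous_id).add
      (continuous_const.mul
        (continuous_id.dotProduct (continuous_const.matrix_mulVec continuous_id)))
  obtain ⟨θs, hfeas, hmin⟩ := sd_exists_minimizer hp hC hα _ contf
  have hInf : sInf S = w ⬝ᵥ θs + (1 / 2) * (θs ⬝ᵥ H *ᵥ θs) := by
    apply le_antisymm
    · exact csInf_le hbddS ⟨θs, hfeas, rfl⟩
    · exact le_csInf ⟨s₀, hs₀⟩ (by rintro s ⟨θ, hθ, rfl⟩; exact hmin θ hθ)
  obtain ⟨ν, hstat⟩ := sd_exists_multiplier hH hC w hα hfeas hmin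
  have hpsd := sd_psd_at_min hH hC w hα hfeas hmin hstat
  set M : Matrix (Fin p) (Fin p) ℝ := H + ν • C with hM
  have hMherm : M.IsHermitian := hH.isHermitian.add (sd_herm_smul hC.isHermitian ν)
  have hMsym := sd_symm_dot M hMherm
  have hMvec : M *ᵥ θs = H *ᵥ θs + ν • (C *ᵥ θs) := by
    rw [hM, add_mulVec, smul_mulVec]
  have hwM : w = -(M *ᵥ θs) := by
    have : w + M *ᵥ θs = 0 := by rw [hMvec, ← add_assoc, hstat]
    linear_combination (norm := module) this
  -- value of the primal optimum in terms of M
  have hstatdot : ∀ v : Fin p → ℝ, w ⬝ᵥ v = -(θs ⬝ᵥ M *ᵥ v) := by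
    intro v
    rw [hwM, neg_dotProduct, dotProduct_comm (M *ᵥ θs) v, hMsym θs v]
  have hval : w ⬝ᵥ θs + (1 / 2) * (θs ⬝ᵥ H *ᵥ θs)
      = -(1 / 2) * (θs ⬝ᵥ M *ᵥ θs) - α ^ 2 * ν / 2 := by
    have h1 := hstatdot θs
    have h2 : θs ⬝ᵥ M *ᵥ θs = θs ⬝ᵥ H *ᵥ θs + ν * α ^ 2 := by
      rw [hM, hquad, hfeas]
    linarith
  -- for every t > 0, ν + t is strictly dual feasible with value ≥ p(α) − α²t/2
  have hkey : ∀ t : ℝ, 0 < t → sInf S - α ^ 2 * t / 2 ≤ sSup D := by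
    intro t ht
    have hMt : (H + (ν + t) • C).PosDef := by
      refine Matrix.PosDef.of_dotProduct_mulVec_pos ?_ ?_
      · exact hH.isHermitian.add (sd_herm_smul hC.isHermitian (ν + t))
      · intro x hx
        have h1 : x ⬝ᵥ (H + (ν + t) • C) *ᵥ x
            = x ⬝ᵥ M *ᵥ x + t * (x ⬝ᵥ C *ᵥ x) := by
          rw [hquad, hM, hquad]; ring
        have h2 := hpsd x
        have h3 := sd_pos_quad hC hx
        have : 0 < x ⬝ᵥ (H + (ν + t) • C) *ᵥ x := by
          rw [h1]; nlinarith
        simpa using this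
    set Mt : Matrix (Fin p) (Fin p) ℝ := H + (ν + t) • C with hMtdef
    have hMtquad : ∀ x : Fin p → ℝ, x ⬝ᵥ Mt *ᵥ x = x ⬝ᵥ M *ᵥ x + t * (x ⬝ᵥ C *ᵥ x) := by
      intro x
      rw [hMtdef, hquad, hM, hquad]; ring
    have hdmem : -(1 / 2) * (w ⬝ᵥ Mt⁻¹ *ᵥ w) - α ^ 2 * (ν + t) / 2 ∈ D :=
      ⟨ν + t, hMt, rfl⟩
    -- bound wᵀMt⁻¹w ≤ θsᵀMθs
    set z : Fin p → ℝ := Mt⁻¹ *ᵥ w with hz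
    have hinv : Mt * Mt⁻¹ = 1 := mul_nonsing_inv Mt hMt.det_pos.ne'.isUnit
    have hMtz : Mt *ᵥ z = w := by rw [hz, mulVec_mulVec, hinv, one_mulVec]
    have a2 : w ⬝ᵥ z = z ⬝ᵥ Mt *ᵥ z := by
      rw [hMtz, dotProduct_comm]
    have a3 : z ⬝ᵥ Mt *ᵥ z = z ⬝ᵥ M *ᵥ z + t * (z ⬝ᵥ C *ᵥ z) := hMtquad z
    have a4 : 0 ≤ t * (z ⬝ᵥ C *ᵥ z) := by
      by_cases hz0 : z = 0
      · rw [hz0]; simp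
      · exact mul_nonneg ht.le (sd_pos_quad hC hz0).le
    have a5 : w ⬝ᵥ z = -(θs ⬝ᵥ M *ᵥ z) := hstatdot z
    have a6 : 0 ≤ z ⬝ᵥ M *ᵥ z + 2 * (θs ⬝ᵥ M *ᵥ z) + θs ⬝ᵥ M *ᵥ θs := by
      have h0 := hpsd (z + θs)
      have hexp : (z + θs) ⬝ᵥ M *ᵥ (z + θs)
          = z ⬝ᵥ M *ᵥ z + 2 * (θs ⬝ᵥ M *ᵥ z) + θs ⬝ᵥ M *ᵥ θs := by
        rw [mulVec_add, dotProduct_add, add_dotProduct, add_dotProduct, hMsym z θs]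
        ring
      rw [hM] at hexp  -- M is a local def; hpsd is about H + ν • C
      rw [hexp] at h0
      exact h0
    have hbound : w ⬝ᵥ Mt⁻¹ *ᵥ w ≤ θs ⬝ᵥ M *ᵥ θs := by
      have hvz : w ⬝ᵥ Mt⁻¹ *ᵥ w = w ⬝ᵥ z := by rw [hz]
      rw [hvz]
      linarith
    have hdle : sInf S - α ^ 2 * t / 2
        ≤ -(1 / 2) * (w ⬝ᵥ Mt⁻¹ *ᵥ w) - α ^ 2 * (ν + t) / 2 := by
      rw [hInf, hval]
      linarith
    exact le_trans hdle (le_csSup hbddD hdmem)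
  have hle2 : sInf S ≤ sSup D := by
    apply le_of_forall_pos_le_add
    intro ε hε
    have ht : (0:ℝ) < 2 * ε / α ^ 2 := by positivity
    have := hkey _ ht
    have hcalc : α ^ 2 * (2 * ε / α ^ 2) / 2 = ε := by
      field_simp
    rw [hcalc] at this
    linarith
  exact le_antisymm hle2 hle1
end

section
/- Monotonicity of the resolvent trace functional: with H ≻ 0 symmetric and C ⪰ 0 symmetric, the map ν ↦ tr(C·(H + νC)⁻¹) is nonincreasing on [0, ∞), and strictly decreasing if C ≠ 0. Consequently, for n ≥ 1, the equation 1/ν = 1 + (1/n)·tr(C·(H + νC)⁻¹) has a unique solution ν* ∈ (0, 1]. -/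
open Matrix

open scoped MatrixOrder in
lemma aux_eig {p : ℕ} (H C : Matrix (Fin p) (Fin p) ℝ) (hH : H.PosDef) (hC : C.PosSemidef) :
    ∃ μ : Fin p → ℝ, (∀ i, 0 ≤ μ i) ∧ (C ≠ 0 → ∃ i, 0 < μ i) ∧
      ∀ ν : ℝ, 0 ≤ ν → (C * (H + ν • C)⁻¹).trace = ∑ i, μ i / (1 + ν * μ i) := by
  classical
  set K := CFC.sqrt H with hKdef
  have hKpsd : K.PosSemidef := (CFC.sqrt_nonneg H).posSemidef
  have hKH : Kᴴ = K := hKpsd.1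
  have hKK : K * K = H := CFC.sqrt_mul_sqrt_self H hH.posSemidef.nonneg
  have hdetK : IsUnit K.det := by
    have h2 : K.det * K.det = H.det := by rw [← det_mul, hKK]
    have := hH.det_pos
    refine isUnit_iff_ne_zero.mpr fun h => ?_
    rw [h, mul_zero] at h2; rw [← h2] at this; exact lt_irrefl _ this
  have hKinv : K * K⁻¹ = 1 := mul_nonsing_inv _ hdetK
  have hinvK : K⁻¹ * K = 1 := nonsing_inv_mul _ hdetK
  have hKiH : (K⁻¹)ᴴ = K⁻¹ := Matrix.IsHermitian.inv hKpsd.1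
  set D := K⁻¹ * C * K⁻¹ with hDdef
  have hD : D.PosSemidef := by
    have := hC.mul_mul_conjTranspose_same K⁻¹
    rwa [hKiH] at this
  have hE : D.IsHermitian := hD.1
  set μ := hE.eigenvalues with hμdef
  set U : Matrix (Fin p) (Fin p) ℝ := (hE.eigenvectorUnitary : Matrix (Fin p) (Fin p) ℝ) with hUdef
  have hU1 : U * star U = 1 := mem_unitaryGroup_iff.mp hE.eigenvectorUnitary.2
  have hU2 : star U * U = 1 := mem_unitaryGroup_iff'.mp hE.eigenvectorUnitary.2
  have hspec : D = U * diagonal μ * star U := by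
    have := hE.spectral_theorem
    simpa using this
  have hCKD : C = K * D * K := by
    rw [hDdef]
    calc C = (K * K⁻¹) * C * (K⁻¹ * K) := by rw [hKinv, hinvK, one_mul, mul_one]
    _ = K * (K⁻¹ * C * K⁻¹) * K := by noncomm_ring
  refine ⟨μ, hD.eigenvalues_nonneg, ?_, ?_⟩
  · intro hC0
    by_contra h
    push_neg at h
    have hall : ∀ i, μ i = 0 := fun i => le_antisymm (h i) (hD.eigenvalues_nonneg i)
    have hD0 : D = 0 := by
      rw [hspec]
      have : diagonal μ = 0 := by
        funext i j; simp [diagonal, hall i]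
      rw [this, mul_zero, zero_mul]
    exact hC0 (by rw [hCKD, hD0, mul_zero, zero_mul])
  · intro ν hν
    have hwpos : ∀ i, (0:ℝ) < 1 + ν * μ i := fun i => by
      have := hD.eigenvalues_nonneg i
      nlinarith
    set W : Matrix (Fin p) (Fin p) ℝ := diagonal (fun i => 1 + ν * μ i) with hWdef
    set Wi : Matrix (Fin p) (Fin p) ℝ := diagonal (fun i => (1 + ν * μ i)⁻¹) with hWidef
    have hWWi : W * Wi = 1 := by
      rw [hWdef, hWidef, diagonal_mul_diagonal]
      have hfn : (fun i => (1 + ν * μ i) * (1 + ν * μ i)⁻¹) = fun _ => (1:ℝ) :=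
        funext fun i => mul_inv_cancel₀ (hwpos i).ne'
      rw [hfn, diagonal_one]
    have h1 : (1 : Matrix (Fin p) (Fin p) ℝ) + ν • D = U * W * star U := by
      have : W = 1 + ν • diagonal μ := by
        rw [hWdef, ← diagonal_one, ← diagonal_smul, diagonal_add]
        congr 1
      rw [this, mul_add, add_mul, mul_one, hU1, mul_smul_comm, smul_mul_assoc, hspec]
    have h2 : H + ν • C = K * (U * W * star U) * K := by
      rw [← h1, mul_add, add_mul, mul_one, hKK, mul_smul_comm, smul_mul_assoc, ← hCKD]
    have h3 : (U * W * star U) * (U * Wi * star U) = 1 := by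
      calc (U * W * star U) * (U * Wi * star U)
          = U * W * (star U * U) * Wi * star U := by noncomm_ring
        _ = U * (W * Wi) * star U := by rw [hU2, mul_one]; noncomm_ring
        _ = 1 := by rw [hWWi, mul_one, hU1]
    have h4 : (H + ν • C)⁻¹ = K⁻¹ * (U * Wi * star U) * K⁻¹ := by
      apply inv_eq_right_inv
      calc (H + ν • C) * (K⁻¹ * (U * Wi * star U) * K⁻¹)
          = K * (U * W * star U) * (K * K⁻¹) * (U * Wi * star U) * K⁻¹ := by
            rw [h2]; noncomm_ring
        _ = K * ((U * W * star U) * (U * Wi * star U)) * K⁻¹ := by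
            rw [hKinv, mul_one]; noncomm_ring
        _ = 1 := by rw [h3, mul_one, hKinv]
    rw [h4]
    have h5 : (C * (K⁻¹ * (U * Wi * star U) * K⁻¹)).trace
        = ((K⁻¹ * C * K⁻¹) * (U * Wi * star U)).trace := by
      rw [show C * (K⁻¹ * (U * Wi * star U) * K⁻¹)
          = (C * K⁻¹ * (U * Wi * star U)) * K⁻¹ by noncomm_ring, trace_mul_cycle]
      congr 1
      noncomm_ring
    rw [h5, ← hDdef]
    have h6 : D * (U * Wi * star U) = U * (diagonal μ * Wi) * star U := by
      rw [hspec]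
      calc U * diagonal μ * star U * (U * Wi * star U)
          = U * diagonal μ * (star U * U) * Wi * star U := by noncomm_ring
        _ = U * (diagonal μ * Wi) * star U := by rw [hU2, mul_one]; noncomm_ring
    rw [h6, trace_mul_cycle, ← mul_assoc, hU2, one_mul, hWidef, diagonal_mul_diagonal,
      trace_diagonal]
    exact Finset.sum_congr rfl fun i _ => (div_eq_mul_inv _ _).symm

/-- ν ↦ tr(C(H+νC)⁻¹) is nonincreasing on [0,∞), strictly decreasing
    if C ≠ 0, and 1/ν = 1 + (1/n)·tr(C(H+νC)⁻¹) has a unique solution ν* ∈ (0,1]. -/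
theorem stmt11 {p n : ℕ} (hp : 1 ≤ p) (hn : 1 ≤ n)
    (H C : Matrix (Fin p) (Fin p) ℝ) (hH : H.PosDef) (hC : C.PosSemidef) :
    AntitoneOn (fun ν : ℝ => (C * (H + ν • C)⁻¹).trace) (Set.Ici 0) ∧
    (C ≠ 0 → StrictAntiOn (fun ν : ℝ => (C * (H + ν • C)⁻¹).trace) (Set.Ici 0)) ∧
    (∃! ν : ℝ, ν ∈ Set.Ioc (0 : ℝ) 1 ∧
      1 / ν = 1 + (1 / (n : ℝ)) * (C * (H + ν • C)⁻¹).trace) := by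
  obtain ⟨μ, hμ0, hμpos, key⟩ := aux_eig H C hH hC
  have hn0 : (0:ℝ) < n := by exact_mod_cast hn.trans_lt' (by norm_num)
  refine ⟨?_, ?_, ?_⟩
  · intro a ha b hb hab
    simp only
    rw [key a ha, key b hb]
    apply Finset.sum_le_sum
    intro i _
    have h1 : 0 < 1 + a * μ i := by nlinarith [hμ0 i, Set.mem_Ici.mp ha]
    have h2 : 1 + a * μ i ≤ 1 + b * μ i := by nlinarith [hμ0 i]
    exact div_le_div_of_nonneg_left (hμ0 i) h1 h2
  · intro hCne a ha b hb hab
    simp only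
    rw [key a ha, key b hb]
    obtain ⟨j, hj⟩ := hμpos hCne
    apply Finset.sum_lt_sum
    · intro i _
      have h1 : 0 < 1 + a * μ i := by nlinarith [hμ0 i, Set.mem_Ici.mp ha]
      have h2 : 1 + a * μ i ≤ 1 + b * μ i := by nlinarith [hμ0 i]
      exact div_le_div_of_nonneg_left (hμ0 i) h1 h2
    · refine ⟨j, Finset.mem_univ j, ?_⟩
      have h1 : 0 < 1 + a * μ j := by nlinarith [Set.mem_Ici.mp ha]
      have h2 : 1 + a * μ j < 1 + b * μ j := by nlinarith
      exact div_lt_div_of_pos_left hj h1 h2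
  · set G : ℝ → ℝ := fun ν => ν - 1 + (1/(n:ℝ)) * ∑ i, ν * μ i / (1 + ν * μ i) with hGdef
    have hGmono : StrictMonoOn G (Set.Icc 0 1) := by
      intro a ha b hb hab
      simp only [hGdef]
      have hsum : ∀ i ∈ Finset.univ, a * μ i / (1 + a * μ i) ≤ b * μ i / (1 + b * μ i) := by
        intro i _
        have h1 : 0 < 1 + a * μ i := by nlinarith [hμ0 i, ha.1]
        have h2 : 0 < 1 + b * μ i := by nlinarith [hμ0 i, hb.1]
        rw [div_le_div_iff₀ h1 h2]
        nlinarith [hμ0 i, ha.1]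
      have := Finset.sum_le_sum hsum
      have hc : (0:ℝ) ≤ 1/(n:ℝ) := by positivity
      nlinarith [mul_le_mul_of_nonneg_left this hc]
    have hGcont : ContinuousOn G (Set.Icc 0 1) := by
      apply ContinuousOn.add (by fun_prop)
      apply ContinuousOn.mul continuousOn_const
      apply continuousOn_finset_sum
      intro i _
      exact ContinuousOn.div (by fun_prop) (by fun_prop)
        (fun x hx => by nlinarith [hμ0 i, hx.1])
    have hG0 : G 0 = -1 := by simp [hGdef]
    have hG1 : 0 ≤ G 1 := by
      have hsum1 : 0 ≤ ∑ i, (1:ℝ) * μ i / (1 + 1 * μ i) :=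
        Finset.sum_nonneg fun i _ =>
          div_nonneg (by nlinarith [hμ0 i]) (by nlinarith [hμ0 i])
      have hc : (0:ℝ) ≤ 1/(n:ℝ) := by positivity
      simp only [hGdef]
      nlinarith [mul_le_mul_of_nonneg_left hsum1 hc]
    have hIVT := intermediate_value_Icc (by norm_num : (0:ℝ) ≤ 1) hGcont
    have h0mem : (0:ℝ) ∈ Set.Icc (G 0) (G 1) := by rw [hG0]; exact ⟨by norm_num, hG1⟩
    obtain ⟨c, hcmem, hGc⟩ := hIVT h0mem
    have hc0 : 0 < c := by
      rcases lt_or_eq_of_le hcmem.1 with h | h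
      · exact h
      · exfalso; rw [← h, hG0] at hGc; norm_num at hGc
    have heq : ∀ ν : ℝ, ν ∈ Set.Ioc (0:ℝ) 1 →
        ((1 / ν = 1 + (1 / (n : ℝ)) * (C * (H + ν • C)⁻¹).trace) ↔ G ν = 0) := by
      intro ν hν
      rw [key ν hν.1.le]
      have hsum : ∑ i, ν * μ i / (1 + ν * μ i) = ν * ∑ i, μ i / (1 + ν * μ i) := by
        rw [Finset.mul_sum]
        exact Finset.sum_congr rfl fun i _ => mul_div_assoc _ _ _
      simp only [hGdef]
      rw [hsum]
      constructor
      · intro h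
        rw [div_eq_iff hν.1.ne'] at h
        linear_combination -h
      · intro h
        rw [div_eq_iff hν.1.ne']
        linear_combination -h
    refine ⟨c, ⟨⟨hc0, hcmem.2⟩, (heq c ⟨hc0, hcmem.2⟩).mpr hGc⟩, ?_⟩
    rintro y ⟨hy, hyeq⟩
    have hGy : G y = 0 := (heq y hy).mp hyeq
    exact hGmono.injOn ⟨hy.1.le, hy.2⟩ ⟨hc0.le, hcmem.2⟩ (by rw [hGy, hGc])
end

section
/- Hessian difference bound from third-derivative control: let ρ : ℝ^p → ℝ be C³ and suppose there is C > 0 such that for all θ, ‖diag(∇³ρ(θ))‖_op ≤ C and ‖offdiag(∇³ρ(θ))‖_op ≤ C·p^{−1/2}. Then for all θ ∈ ℝ^p, ‖∇²ρ(θ) − ∇²ρ(0)‖_F ≤ 2C·‖θ‖. -/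
/-- Operator norm of a p×p×p tensor as sup of the trilinear form over unit vectors. -/
noncomputable def tensOpNorm {p : ℕ} (T : Fin p → Fin p → Fin p → ℝ) : ℝ :=
  sSup {x : ℝ | ∃ a b c : EuclideanSpace ℝ (Fin p), ‖a‖ = 1 ∧ ‖b‖ = 1 ∧ ‖c‖ = 1 ∧
    x = |∑ i, ∑ j, ∑ k, T i j k * a i * b j * c k|}

/-- Diagonal part of a 3-tensor: keeps only entries T_{iii}. -/
def tensDiag {p : ℕ} (T : Fin p → Fin p → Fin p → ℝ) : Fin p → Fin p → Fin p → ℝ :=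
  fun i j k => if i = j ∧ j = k then T i j k else 0

/-- Third derivative tensor of ρ at θ, in the canonical basis. -/
noncomputable def thirdDeriv {p : ℕ} (ρ : EuclideanSpace ℝ (Fin p) → ℝ)
    (θ : EuclideanSpace ℝ (Fin p)) : Fin p → Fin p → Fin p → ℝ :=
  fun i j k => iteratedFDeriv ℝ 3 ρ θ
    ![EuclideanSpace.single i (1 : ℝ), EuclideanSpace.single j (1 : ℝ),
      EuclideanSpace.single k (1 : ℝ)]

/-- Hessian matrix of ρ at θ, in the canonical basis. -/
noncomputable def hessMat {p : ℕ} (ρ : EuclideanSpace ℝ (Fin p) → ℝ)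
    (θ : EuclideanSpace ℝ (Fin p)) : Fin p → Fin p → ℝ :=
  fun i j => iteratedFDeriv ℝ 2 ρ θ
    ![EuclideanSpace.single i (1 : ℝ), EuclideanSpace.single j (1 : ℝ)]

section Aux

variable {p : ℕ}


lemma coord_le_norm (a : EuclideanSpace ℝ (Fin p)) (i : Fin p) : |a i| ≤ ‖a‖ := by
  rw [EuclideanSpace.norm_eq]
  have : |a i| = Real.sqrt (‖a i‖ ^ 2) := by
    rw [Real.sqrt_sq_eq_abs, abs_norm, Real.norm_eq_abs]
  rw [this]
  apply Real.sqrt_le_sqrt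
  exact Finset.single_le_sum (f := fun j => ‖a j‖ ^ 2) (fun j _ => by positivity) (Finset.mem_univ i)

lemma bddAbove_tensSet (T : Fin p → Fin p → Fin p → ℝ) :
    BddAbove {x : ℝ | ∃ a b c : EuclideanSpace ℝ (Fin p), ‖a‖ = 1 ∧ ‖b‖ = 1 ∧ ‖c‖ = 1 ∧
      x = |∑ i, ∑ j, ∑ k, T i j k * a i * b j * c k|} := by
  refine ⟨∑ i, ∑ j, ∑ k, |T i j k|, ?_⟩
  rintro x ⟨a, b, c, ha, hb, hc, rfl⟩
  calc |∑ i, ∑ j, ∑ k, T i j k * a i * b j * c k|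
      ≤ ∑ i, |∑ j, ∑ k, T i j k * a i * b j * c k| := Finset.abs_sum_le_sum_abs _ _
    _ ≤ ∑ i, ∑ j, ∑ k, |T i j k| := by
        refine Finset.sum_le_sum fun i _ => ?_
        calc |∑ j, ∑ k, T i j k * a i * b j * c k|
            ≤ ∑ j, |∑ k, T i j k * a i * b j * c k| := Finset.abs_sum_le_sum_abs _ _
          _ ≤ ∑ j, ∑ k, |T i j k| := by
              refine Finset.sum_le_sum fun j _ => ?_
              calc |∑ k, T i j k * a i * b j * c k|
                  ≤ ∑ k, |T i j k * a i * b j * c k| := Finset.abs_sum_le_sum_abs _ _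
                _ ≤ ∑ k, |T i j k| := by
                    refine Finset.sum_le_sum fun k _ => ?_
                    rw [abs_mul, abs_mul, abs_mul]
                    have h1 : |a i| ≤ 1 := ha ▸ coord_le_norm a i
                    have h2 : |b j| ≤ 1 := hb ▸ coord_le_norm b j
                    have h3 : |c k| ≤ 1 := hc ▸ coord_le_norm c k
                    have h12 : |a i| * |b j| ≤ 1 := mul_le_one₀ h1 (abs_nonneg _) h2
                    have h123 : |a i| * |b j| * |c k| ≤ 1 := mul_le_one₀ h12 (abs_nonneg _) h3
                    calc |T i j k| * |a i| * |b j| * |c k|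
                        = |T i j k| * (|a i| * |b j| * |c k|) := by ring
                      _ ≤ |T i j k| * 1 := mul_le_mul_of_nonneg_left h123 (abs_nonneg _)
                      _ = |T i j k| := mul_one _

lemma le_tensOpNorm (T : Fin p → Fin p → Fin p → ℝ) (a b c : EuclideanSpace ℝ (Fin p))
    (ha : ‖a‖ = 1) (hb : ‖b‖ = 1) (hc : ‖c‖ = 1) :
    |∑ i, ∑ j, ∑ k, T i j k * a i * b j * c k| ≤ tensOpNorm T :=
  le_csSup (bddAbove_tensSet T) ⟨a, b, c, ha, hb, hc, rfl⟩

lemma tensOpNorm_nonneg (hp : 1 ≤ p) (T : Fin p → Fin p → Fin p → ℝ) :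
    0 ≤ tensOpNorm T := by
  have i0 : Fin p := ⟨0, hp⟩
  have h1 : ‖(EuclideanSpace.single i0 (1:ℝ) : EuclideanSpace ℝ (Fin p))‖ = 1 := by
    rw [EuclideanSpace.norm_single]; norm_num
  exact le_trans (abs_nonneg _)
    (le_tensOpNorm T (EuclideanSpace.single i0 1) (EuclideanSpace.single i0 1)
      (EuclideanSpace.single i0 1) h1 h1 h1)

lemma sum3_rot (f : Fin p → Fin p → Fin p → ℝ) :
    ∑ i, ∑ j, ∑ k, f i j k = ∑ k, ∑ i, ∑ j, f i j k := by
  calc ∑ i, ∑ j, ∑ k, f i j k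
      = ∑ i, ∑ k, ∑ j, f i j k := Finset.sum_congr rfl fun i _ => Finset.sum_comm
    _ = ∑ k, ∑ i, ∑ j, f i j k := Finset.sum_comm

lemma tensOpNorm_perm (T : Fin p → Fin p → Fin p → ℝ) :
    tensOpNorm (fun i j k => T k i j) = tensOpNorm T := by
  unfold tensOpNorm
  congr 1
  ext x
  constructor
  · rintro ⟨a, b, c, ha, hb, hc, rfl⟩
    refine ⟨c, a, b, hc, ha, hb, ?_⟩
    congr 1
    rw [show (∑ i, ∑ j, ∑ k, T k i j * a i * b j * c k)
        = ∑ k, ∑ i, ∑ j, T k i j * a i * b j * c k from sum3_rot _]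
    exact Finset.sum_congr rfl fun i _ => Finset.sum_congr rfl fun j _ =>
      Finset.sum_congr rfl fun k _ => by ring
  · rintro ⟨a, b, c, ha, hb, hc, rfl⟩
    refine ⟨b, c, a, hb, hc, ha, ?_⟩
    congr 1
    rw [show (∑ i, ∑ j, ∑ k, T k i j * b i * c j * a k)
        = ∑ k, ∑ i, ∑ j, T k i j * b i * c j * a k from sum3_rot _]
    exact Finset.sum_congr rfl fun i _ => Finset.sum_congr rfl fun j _ =>
      Finset.sum_congr rfl fun k _ => by ring

lemma norm_sq_eq (v : EuclideanSpace ℝ (Fin p)) : ‖v‖ ^ 2 = ∑ k, v k ^ 2 := by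
  rw [EuclideanSpace.norm_eq, Real.sq_sqrt (by positivity)]
  exact Finset.sum_congr rfl fun k _ => by rw [Real.norm_eq_abs, sq_abs]

lemma diag_entry_le (U : Fin p → Fin p → Fin p → ℝ) (i : Fin p) :
    |U i i i| ≤ tensOpNorm (tensDiag U) := by
  have h1 : ‖(EuclideanSpace.single i (1:ℝ) : EuclideanSpace ℝ (Fin p))‖ = 1 := by
    rw [EuclideanSpace.norm_single]; norm_num
  have h := le_tensOpNorm (tensDiag U) (EuclideanSpace.single i 1) (EuclideanSpace.single i 1)
    (EuclideanSpace.single i 1) h1 h1 h1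
  have heq : (∑ i', ∑ j', ∑ k', tensDiag U i' j' k' *
      (EuclideanSpace.single i (1:ℝ) : EuclideanSpace ℝ (Fin p)) i' *
      (EuclideanSpace.single i (1:ℝ) : EuclideanSpace ℝ (Fin p)) j' *
      (EuclideanSpace.single i (1:ℝ) : EuclideanSpace ℝ (Fin p)) k') = U i i i := by
    simp [tensDiag, EuclideanSpace.single_apply]
  rw [heq] at h
  exact h

lemma row_bound (S : Fin p → Fin p → Fin p → ℝ) (v : EuclideanSpace ℝ (Fin p)) (i : Fin p) :
    Real.sqrt (∑ j, (∑ k, S i j k * v k) ^ 2) ≤ tensOpNorm S * ‖v‖ := by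
  have hp : 1 ≤ p := i.pos
  set r : Fin p → ℝ := fun j => ∑ k, S i j k * v k with hr
  set Rsq : ℝ := ∑ j, r j ^ 2 with hRsq
  have hRsqnn : 0 ≤ Rsq := Finset.sum_nonneg fun j _ => by positivity
  have hrhs : 0 ≤ tensOpNorm S * ‖v‖ :=
    mul_nonneg (tensOpNorm_nonneg hp S) (norm_nonneg v)
  by_cases hR : Rsq = 0
  · rw [hR, Real.sqrt_zero]; exact hrhs
  have hRpos : 0 < Rsq := lt_of_le_of_ne hRsqnn (Ne.symm hR)
  have hRs : 0 < Real.sqrt Rsq := Real.sqrt_pos.mpr hRpos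
  by_cases hv : v = 0
  · exfalso; apply hR
    rw [hRsq]
    apply Finset.sum_eq_zero
    intro j _
    have : r j = 0 := by
      rw [hr]
      apply Finset.sum_eq_zero
      intro k _
      rw [hv]
      simp
    rw [this]; ring
  have hvpos : 0 < ‖v‖ := norm_pos_iff.mpr hv
  set R := Real.sqrt Rsq with hRdef
  have hR2 : R ^ 2 = Rsq := Real.sq_sqrt hRsqnn
  -- witnesses
  set a : EuclideanSpace ℝ (Fin p) := EuclideanSpace.single i 1 with hadef
  set b : EuclideanSpace ℝ (Fin p) := (WithLp.equiv 2 (Fin p → ℝ)).symm (fun j => r j / R) with hbdef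
  set c : EuclideanSpace ℝ (Fin p) := (WithLp.equiv 2 (Fin p → ℝ)).symm (fun k => v k / ‖v‖) with hcdef
  have hb_app : ∀ j, b j = r j / R := fun j => rfl
  have hc_app : ∀ k, c k = v k / ‖v‖ := fun k => rfl
  have ha : ‖a‖ = 1 := by rw [hadef, EuclideanSpace.norm_single]; norm_num
  have hbn : ‖b‖ = 1 := by
    rw [EuclideanSpace.norm_eq]
    have : ∑ j, ‖b j‖ ^ 2 = 1 := by
      have : ∀ j, ‖b j‖ ^ 2 = r j ^ 2 / Rsq := by
        intro j
        rw [hb_app, Real.norm_eq_abs, sq_abs, div_pow, hR2]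
      rw [Finset.sum_congr rfl fun j _ => this j, ← Finset.sum_div, ← hRsq,
        div_self (ne_of_gt hRpos)]
    rw [this, Real.sqrt_one]
  have hcn : ‖c‖ = 1 := by
    rw [EuclideanSpace.norm_eq]
    have : ∑ k, ‖c k‖ ^ 2 = 1 := by
      have h1 : ∀ k, ‖c k‖ ^ 2 = v k ^ 2 / ‖v‖ ^ 2 := by
        intro k
        rw [hc_app, Real.norm_eq_abs, sq_abs, div_pow]
      rw [Finset.sum_congr rfl fun k _ => h1 k, ← Finset.sum_div, ← norm_sq_eq,
        div_self (by positivity)]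
    rw [this, Real.sqrt_one]
  have hval : (∑ i', ∑ j, ∑ k, S i' j k * a i' * b j * c k) = R / ‖v‖ := by
    have hcollapse : ∀ i', (∑ j, ∑ k, S i' j k * a i' * b j * c k)
        = a i' * ∑ j, ∑ k, S i' j k * b j * c k := by
      intro i'
      rw [Finset.mul_sum]
      refine Finset.sum_congr rfl fun j _ => ?_
      rw [Finset.mul_sum]
      exact Finset.sum_congr rfl fun k _ => by ring
    rw [Finset.sum_congr rfl fun i' _ => hcollapse i']
    have hsingle : ∀ i', a i' = if i' = i then (1:ℝ) else 0 := by
      intro i'; rw [hadef]; exact EuclideanSpace.single_apply i 1 i'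
    rw [Finset.sum_congr rfl fun i' _ => by rw [hsingle i']]
    simp only [ite_mul, one_mul, zero_mul]
    rw [Finset.sum_ite_eq' Finset.univ i (fun i' => ∑ j, ∑ k, S i' j k * b j * c k)]
    simp only [Finset.mem_univ, if_true]
    have hinner : ∀ j, (∑ k, S i j k * b j * c k) = (r j / R) * (r j / ‖v‖) := by
      intro j
      have : (∑ k, S i j k * b j * c k) = (r j / R) / ‖v‖ * ∑ k, S i j k * v k := by
        rw [Finset.mul_sum]
        refine Finset.sum_congr rfl fun k _ => ?_
        rw [hb_app, hc_app]
        field_simp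
      rw [this]
      have hrj : (∑ k, S i j k * v k) = r j := rfl
      rw [hrj]
      field_simp
    rw [Finset.sum_congr rfl fun j _ => hinner j]
    have : ∀ j, (r j / R) * (r j / ‖v‖) = r j ^ 2 / (R * ‖v‖) := by
      intro j; field_simp
    rw [Finset.sum_congr rfl fun j _ => this j, ← Finset.sum_div, ← hRsq, ← hR2]
    rw [pow_two, mul_div_mul_left _ _ (ne_of_gt hRs)]
  have hle := le_tensOpNorm S a b c ha hbn hcn
  rw [hval] at hle
  rw [abs_of_nonneg (by positivity)] at hle
  calc R = (R / ‖v‖) * ‖v‖ := by field_simp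
    _ ≤ tensOpNorm S * ‖v‖ := mul_le_mul_of_nonneg_right hle (le_of_lt hvpos) |>.trans_eq rfl

lemma euclid_norm_prod (f : Fin p × Fin p → ℝ) :
    ‖((WithLp.equiv 2 (Fin p × Fin p → ℝ)).symm f : EuclideanSpace ℝ (Fin p × Fin p))‖
      = Real.sqrt (∑ i, ∑ j, f (i, j) ^ 2) := by
  rw [EuclideanSpace.norm_eq]
  congr 1
  rw [Fintype.sum_prod_type]
  exact Finset.sum_congr rfl fun i _ => Finset.sum_congr rfl fun j _ => by
    rw [Real.norm_eq_abs, sq_abs]; rfl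

lemma contraction_bound (hp : 1 ≤ p) (U : Fin p → Fin p → Fin p → ℝ)
    (v : EuclideanSpace ℝ (Fin p)) :
    Real.sqrt (∑ i, ∑ j, (∑ k, U i j k * v k) ^ 2) ≤
      (tensOpNorm (tensDiag U) +
        Real.sqrt p * tensOpNorm (fun i j k => U i j k - tensDiag U i j k)) * ‖v‖ := by
  set D : ℝ := tensOpNorm (tensDiag U) with hD
  set Od : Fin p → Fin p → Fin p → ℝ := fun i j k => U i j k - tensDiag U i j k with hOdd
  set O : ℝ := tensOpNorm Od with hO
  have hDnn : 0 ≤ D := tensOpNorm_nonneg hp _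
  have hOnn : 0 ≤ O := tensOpNorm_nonneg hp _
  set M : EuclideanSpace ℝ (Fin p × Fin p) :=
    (WithLp.equiv 2 (Fin p × Fin p → ℝ)).symm (fun q => ∑ k, U q.1 q.2 k * v k) with hM
  set Md : EuclideanSpace ℝ (Fin p × Fin p) :=
    (WithLp.equiv 2 (Fin p × Fin p → ℝ)).symm (fun q => ∑ k, tensDiag U q.1 q.2 k * v k) with hMd
  set Mo : EuclideanSpace ℝ (Fin p × Fin p) :=
    (WithLp.equiv 2 (Fin p × Fin p → ℝ)).symm (fun q => ∑ k, Od q.1 q.2 k * v k) with hMo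
  have happ : ∀ q, M q = Md q + Mo q := by
    intro q
    show (∑ k, U q.1 q.2 k * v k) = (∑ k, tensDiag U q.1 q.2 k * v k) + ∑ k, Od q.1 q.2 k * v k
    rw [← Finset.sum_add_distrib]
    refine Finset.sum_congr rfl fun k _ => ?_
    rw [hOdd]; ring
  have hsplit : M = Md + Mo := by
    ext q
    rw [happ q]
    rfl
  have hMnorm : ‖M‖ = Real.sqrt (∑ i, ∑ j, (∑ k, U i j k * v k) ^ 2) := euclid_norm_prod _
  have hMdnorm : ‖Md‖ ≤ D * ‖v‖ := by
    rw [hMd, euclid_norm_prod]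
    have hentry : ∀ i j : Fin p, (∑ k, tensDiag U i j k * v k) = if i = j then U i i i * v i else 0 := by
      intro i j
      by_cases h : i = j
      · subst h
        rw [if_pos rfl]
        rw [Finset.sum_congr rfl (fun k _ => by
          show (if i = i ∧ i = k then U i i k else 0) * v k = if i = k then U i i k * v k else 0
          by_cases hk : i = k <;> simp [hk])]
        rw [Finset.sum_ite_eq Finset.univ i (fun k => U i i k * v k)]
        simp
      · rw [if_neg h]
        apply Finset.sum_eq_zero
        intro k _
        have hnc : ¬(i = j ∧ j = k) := fun hc => h hc.1
        have : tensDiag U i j k = 0 := by simp [tensDiag, hnc]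
        rw [this, zero_mul]
    have hsq : (∑ i, ∑ j, (∑ k, tensDiag U i j k * v k) ^ 2) ≤ D ^ 2 * ‖v‖ ^ 2 := by
      have : ∀ i : Fin p, (∑ j, (∑ k, tensDiag U i j k * v k) ^ 2) = (U i i i * v i) ^ 2 := by
        intro i
        have e1 : ∀ j : Fin p, ((if i = j then U i i i * v i else 0) : ℝ) ^ 2
            = if i = j then (U i i i * v i) ^ 2 else 0 := by
          intro j; by_cases h : i = j <;> simp [h]
        rw [Finset.sum_congr rfl (fun j _ => by rw [hentry i j, e1 j])]
        rw [Finset.sum_ite_eq Finset.univ i (fun _ => (U i i i * v i) ^ 2)]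
        simp
      rw [Finset.sum_congr rfl fun i _ => this i]
      rw [norm_sq_eq, Finset.mul_sum]
      refine Finset.sum_le_sum fun i _ => ?_
      have h1 : |U i i i| ≤ D := diag_entry_le U i
      have h2 : U i i i ^ 2 ≤ D ^ 2 := by
        rw [← sq_abs]
        exact pow_le_pow_left₀ (abs_nonneg _) h1 2
      rw [mul_pow]
      exact mul_le_mul_of_nonneg_right h2 (by positivity)
    calc Real.sqrt (∑ i, ∑ j, (∑ k, tensDiag U i j k * v k) ^ 2)
        ≤ Real.sqrt (D ^ 2 * ‖v‖ ^ 2) := Real.sqrt_le_sqrt hsq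
      _ = D * ‖v‖ := by
          rw [← mul_pow, Real.sqrt_sq (by positivity)]
  have hMonorm : ‖Mo‖ ≤ Real.sqrt p * O * ‖v‖ := by
    rw [hMo, euclid_norm_prod]
    have hsq : (∑ i, ∑ j, (∑ k, Od i j k * v k) ^ 2) ≤ (p : ℝ) * (O * ‖v‖) ^ 2 := by
      calc (∑ i, ∑ j, (∑ k, Od i j k * v k) ^ 2)
          ≤ ∑ _i : Fin p, (O * ‖v‖) ^ 2 := by
            refine Finset.sum_le_sum fun i _ => ?_
            have hrow := row_bound Od v i
            have : (∑ j, (∑ k, Od i j k * v k) ^ 2)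
                = Real.sqrt (∑ j, (∑ k, Od i j k * v k) ^ 2) ^ 2 := by
              rw [Real.sq_sqrt (Finset.sum_nonneg fun j _ => by positivity)]
            rw [this]
            exact pow_le_pow_left₀ (Real.sqrt_nonneg _) hrow 2
        _ = (p : ℝ) * (O * ‖v‖) ^ 2 := by
            rw [Finset.sum_const, Finset.card_univ, Fintype.card_fin, nsmul_eq_mul]
    calc Real.sqrt (∑ i, ∑ j, (∑ k, Od i j k * v k) ^ 2)
        ≤ Real.sqrt ((p : ℝ) * (O * ‖v‖) ^ 2) := Real.sqrt_le_sqrt hsq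
      _ = Real.sqrt p * (O * ‖v‖) := by
          rw [Real.sqrt_mul (by positivity), Real.sqrt_sq (by positivity)]
      _ = Real.sqrt p * O * ‖v‖ := by ring
  calc Real.sqrt (∑ i, ∑ j, (∑ k, U i j k * v k) ^ 2)
      = ‖M‖ := hMnorm.symm
    _ = ‖Md + Mo‖ := by rw [hsplit]
    _ ≤ ‖Md‖ + ‖Mo‖ := norm_add_le _ _
    _ ≤ D * ‖v‖ + Real.sqrt p * O * ‖v‖ := add_le_add hMdnorm hMonorm
    _ = (D + Real.sqrt p * O) * ‖v‖ := by ring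

lemma multilin_cons_expand {n : ℕ}
    (f : ContinuousMultilinearMap ℝ (fun _ : Fin (n+1) => EuclideanSpace ℝ (Fin p)) ℝ)
    (v : EuclideanSpace ℝ (Fin p)) (m : Fin n → EuclideanSpace ℝ (Fin p)) :
    f (Fin.cons v m) = ∑ k, v k * f (Fin.cons (EuclideanSpace.single k 1) m) := by
  set L : EuclideanSpace ℝ (Fin p) →ₗ[ℝ] ℝ :=
    { toFun := fun w => f (Fin.cons w m)
      map_add' := fun x y => f.cons_add m x y
      map_smul' := fun c x => f.cons_smul m c x } with hL
  have hv := (EuclideanSpace.basisFun (Fin p) ℝ).sum_repr v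
  calc f (Fin.cons v m) = L v := rfl
    _ = L (∑ k, (EuclideanSpace.basisFun (Fin p) ℝ).repr v k •
          (EuclideanSpace.basisFun (Fin p) ℝ) k) := by rw [hv]
    _ = ∑ k, v k * f (Fin.cons (EuclideanSpace.single k 1) m) := by
        rw [map_sum]
        refine Finset.sum_congr rfl fun k _ => ?_
        rw [map_smul, EuclideanSpace.basisFun_repr, EuclideanSpace.basisFun_apply,
          smul_eq_mul]
        rfl

lemma tensDiag_perm (T : Fin p → Fin p → Fin p → ℝ) :
    tensDiag (fun i j k => T k i j) = fun i j k => tensDiag T k i j := by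
  funext i j k
  simp only [tensDiag]
  by_cases h : i = j ∧ j = k
  · obtain ⟨h1, h2⟩ := h
    subst h1; subst h2
    simp
  · rw [if_neg h, if_neg]
    rintro ⟨h1, h2⟩
    exact h ⟨h2, h2.symm.trans h1.symm⟩


end Aux

/-- if the diagonal part of ∇³ρ has operator norm ≤ C and the
    off-diagonal part has operator norm ≤ C·p^{-1/2}, then
    ‖∇²ρ(θ) − ∇²ρ(0)‖_F ≤ 2C‖θ‖. -/
theorem stmt14 {p : ℕ} (hp : 1 ≤ p) (ρ : EuclideanSpace ℝ (Fin p) → ℝ)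
    (hC3 : ContDiff ℝ 3 ρ) (C : ℝ) (hCpos : 0 < C)
    (hdiag : ∀ θ, tensOpNorm (tensDiag (thirdDeriv ρ θ)) ≤ C)
    (hoff : ∀ θ, tensOpNorm
      (fun i j k => thirdDeriv ρ θ i j k - tensDiag (thirdDeriv ρ θ) i j k) ≤
        C / Real.sqrt p) :
    ∀ θ : EuclideanSpace ℝ (Fin p),
      Real.sqrt (∑ i, ∑ j, (hessMat ρ θ i j - hessMat ρ 0 i j) ^ 2) ≤
        2 * C * ‖θ‖ := by

  intro θ
  set g : EuclideanSpace ℝ (Fin p) →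
      ContinuousMultilinearMap ℝ (fun _ : Fin 2 => EuclideanSpace ℝ (Fin p)) ℝ :=
    iteratedFDeriv ℝ 2 ρ with hg_def
  set A : ContinuousMultilinearMap ℝ (fun _ : Fin 2 => EuclideanSpace ℝ (Fin p)) ℝ →L[ℝ]
      EuclideanSpace ℝ (Fin p × Fin p) :=
    ((PiLp.continuousLinearEquiv 2 ℝ (fun _ : Fin p × Fin p => ℝ)).symm.toContinuousLinearMap).comp
      (ContinuousLinearMap.pi fun q : Fin p × Fin p =>
        ContinuousMultilinearMap.apply ℝ (fun _ : Fin 2 => EuclideanSpace ℝ (Fin p)) ℝ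
          ![EuclideanSpace.single q.1 1, EuclideanSpace.single q.2 1]) with hA_def
  set Φ : EuclideanSpace ℝ (Fin p) → EuclideanSpace ℝ (Fin p × Fin p) :=
    fun x => A (g x) with hΦ_def
  have hg : Differentiable ℝ g := by
    rw [hg_def]
    exact (hC3.iteratedFDeriv_right (m := 1) (by norm_num)).differentiable one_ne_zero
  have hΦ : ∀ x, HasFDerivAt Φ (A.comp (fderiv ℝ g x)) x := fun x =>
    A.hasFDerivAt.comp x (hg x).hasFDerivAt
  have hcomp : ∀ (x v : EuclideanSpace ℝ (Fin p)) (q : Fin p × Fin p),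
      (A.comp (fderiv ℝ g x)) v q = ∑ k, thirdDeriv ρ x k q.1 q.2 * v k := by
    intro x v q
    have h1 : (A.comp (fderiv ℝ g x)) v q
        = (fderiv ℝ g x v) ![EuclideanSpace.single q.1 1, EuclideanSpace.single q.2 1] := rfl
    have h2 := iteratedFDeriv_succ_apply_left (𝕜 := ℝ) (n := 2) (f := ρ) (x := x)
      (m := Fin.cons v ![EuclideanSpace.single q.1 1, EuclideanSpace.single q.2 1])
    rw [Fin.cons_zero, Fin.tail_cons] at h2
    rw [h1, hg_def, ← h2]
    rw [multilin_cons_expand (n := 2) (iteratedFDeriv ℝ (2+1) ρ x) v _]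
    exact Finset.sum_congr rfl fun k _ => mul_comm (v k) _
  have hbound : ∀ x, ‖A.comp (fderiv ℝ g x)‖ ≤ 2 * C := by
    intro x
    apply ContinuousLinearMap.opNorm_le_bound _ (by positivity)
    intro v
    set U : Fin p → Fin p → Fin p → ℝ := fun i j k => thirdDeriv ρ x k i j with hU
    have hnorm : ‖(A.comp (fderiv ℝ g x)) v‖
        = Real.sqrt (∑ i, ∑ j, (∑ k, U i j k * v k) ^ 2) := by
      have heq : (A.comp (fderiv ℝ g x)) v
          = (WithLp.equiv 2 (Fin p × Fin p → ℝ)).symm (fun q => ∑ k, U q.1 q.2 k * v k) := by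
        ext q
        exact hcomp x v q
      rw [heq, euclid_norm_prod]
    have hdiagU : tensOpNorm (tensDiag U) ≤ C := by
      rw [hU, tensDiag_perm, tensOpNorm_perm]
      exact hdiag x
    have hoffU : tensOpNorm (fun i j k => U i j k - tensDiag U i j k) ≤ C / Real.sqrt p := by
      have hperm : (fun i j k => U i j k - tensDiag U i j k)
          = fun i j k => (fun i' j' k' => thirdDeriv ρ x i' j' k'
              - tensDiag (thirdDeriv ρ x) i' j' k') k i j := by
        rw [hU, tensDiag_perm]
      rw [hperm, tensOpNorm_perm]
      exact hoff x
    rw [hnorm]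
    have hsp : (0:ℝ) < Real.sqrt p := Real.sqrt_pos.mpr (by exact_mod_cast Nat.lt_of_lt_of_le Nat.zero_lt_one hp)
    calc Real.sqrt (∑ i, ∑ j, (∑ k, U i j k * v k) ^ 2)
        ≤ (tensOpNorm (tensDiag U) +
            Real.sqrt p * tensOpNorm (fun i j k => U i j k - tensDiag U i j k)) * ‖v‖ :=
          contraction_bound hp U v
      _ ≤ (C + Real.sqrt p * (C / Real.sqrt p)) * ‖v‖ := by
          apply mul_le_mul_of_nonneg_right _ (norm_nonneg v)
          exact add_le_add hdiagU (mul_le_mul_of_nonneg_left hoffU (Real.sqrt_nonneg _))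
      _ = 2 * C * ‖v‖ := by
          rw [mul_div_cancel₀ _ (ne_of_gt hsp)]
          ring
  have key : ‖Φ θ - Φ 0‖ ≤ 2 * C * ‖θ - 0‖ :=
    Convex.norm_image_sub_le_of_norm_hasFDerivWithin_le
      (fun x _ => (hΦ x).hasFDerivWithinAt) (fun x _ => hbound x) convex_univ
      (Set.mem_univ 0) (Set.mem_univ θ)
  have hdiff : Φ θ - Φ 0 = (WithLp.equiv 2 (Fin p × Fin p → ℝ)).symm
      (fun q => hessMat ρ θ q.1 q.2 - hessMat ρ 0 q.1 q.2) := by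
    ext q
    rfl
  rw [sub_zero] at key
  calc Real.sqrt (∑ i, ∑ j, (hessMat ρ θ i j - hessMat ρ 0 i j) ^ 2)
      = ‖Φ θ - Φ 0‖ := by rw [hdiff, euclid_norm_prod]
    _ ≤ 2 * C * ‖θ‖ := key
end
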